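/- arXiv:1004.1500 — 3 statements merged into one kernel-verified Lean document; each statement's English description precedes it below -/
import Mathlib

section
/- Assume the nondegeneracy condition for the QVE Mx = a + b(x,x). Fix splittings b = b₁ + b₂, where b₁, b₂ are bilinear and map pairs of nonnegative vectors to nonnegative vectors, and M = N − P, where N is an M-matrix and P ≥ 0. Set J(x) := N − b₁(·,x) (the matrix of w ↦ Nw − b₁(w,x)) and g(x) := a + Px + b₂(x,x). Let x₀ satisfy 0 ≤ x₀ ≤ x* and F(x₀) ≤ 0 (for instance x₀ = 0), and define x_{k+1} = J(x_k)⁻¹ g(x_k). Then: (1) J(x_k) is nonsingular for all k, so the iteration is well defined; (2) x_k ≤ x_{k+1} ≤ x* for all k and x_k → x* as k → ∞; (3) F(x_k) ≤ 0 for all k. -/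
open Matrix Filter Topology

/-- The spectral radius of a real square matrix: the supremum of the norms of
its complex eigenvalues. -/
noncomputable def specRad {n : ℕ} (A : Matrix (Fin n) (Fin n) ℝ) : ℝ :=
  sSup {r : ℝ | ∃ μ ∈ spectrum ℂ (A.map (Complex.ofReal)), ‖μ‖ = r}

/-- An M-matrix: a matrix of the form `s • 1 - P` with `P ≥ 0` and `ρ(P) ≤ s`. -/
def IsMMat {n : ℕ} (A : Matrix (Fin n) (Fin n) ℝ) : Prop :=
  ∃ (s : ℝ) (P : Matrix (Fin n) (Fin n) ℝ),
    (∀ i j, 0 ≤ P i j) ∧ specRad P ≤ s ∧ A = s • (1 : Matrix (Fin n) (Fin n) ℝ) - P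

/-- A nonsingular M-matrix: an M-matrix that is invertible. -/
def IsNsMMat {n : ℕ} (A : Matrix (Fin n) (Fin n) ℝ) : Prop :=
  IsMMat A ∧ IsUnit A.det

/-!
Everything rests on the minimality of `x*`: a nonnegative supersolution `z`, i.e.
`a + b(z,z) ≤ Mz`, dominates `x*`, since for small `α > 0` the map
`y ↦ y + α (a + b(y,y) - My)` is monotone on `[0, z]` and maps it into itself (Knaster–Tarski).
If `u ≥ 0` and `J(x) u ≤ 0` for some `0 ≤ x ≤ x*`, then `Mu ≤ b(u, x*)`; after scaling `u` below
`x*`, the point `x* - u/2` is such a supersolution, so `u = 0`. For the Z-matrix `J(x)` this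
gives `J(x) v ≥ 0 → v ≥ 0` (apply it to the negative part of `v`), hence `J(x)` is nonsingular.
Monotonicity, the bound `x_{k+1} ≤ x*` and `F(x_{k+1}) ≤ 0` all come from the single identity
`(J(x) w - g(x)) - F(w) = P(w - x) + b₁(w, w - x) + b₂(w,w) - b₂(x,x)` at `w = x, x*, x_{k+1}`.
The iterates then increase to a nonnegative solution below `x*`, which by minimality is `x*`.
-/

lemma exists_fixedPt_of_monotoneOn_Icc {α : Type*} [ConditionallyCompleteLattice α] {l u : α}
    (hlu : l ≤ u) {G : α → α} (hG : MonotoneOn G (Set.Icc l u)) (hl : l ≤ G l)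
    (hu : G u ≤ u) : ∃ y ∈ Set.Icc l u, G y = y := by
  have : Fact (l ≤ u) := ⟨hlu⟩
  let f : Set.Icc l u →o Set.Icc l u :=
    ⟨fun y => ⟨G y, hl.trans (hG (Set.left_mem_Icc.2 hlu) y.2 y.2.1),
      (hG y.2 (Set.right_mem_Icc.2 hlu) y.2.2).trans hu⟩, fun y y' h => hG y.2 y'.2 h⟩
  exact ⟨f.lfp, f.lfp.2, congrArg Subtype.val f.map_lfp⟩

lemma exists_pos_forall_mul_le {ι : Type*} [Finite ι] (f g : ι → ℝ) (hg : ∀ i, 0 < g i) :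
    ∃ c > 0, ∀ i, c * f i ≤ g i := by
  have h : ∀ᶠ c in 𝓝[>] (0 : ℝ), ∀ i, c * f i < g i := by
    refine Filter.eventually_all.2 fun i => nhdsWithin_le_nhds ?_
    have : Tendsto (fun c : ℝ => c * f i) (𝓝 0) (𝓝 (0 * f i)) := tendsto_id.mul_const _
    exact this.eventually (gt_mem_nhds (by simpa using hg i))
  obtain ⟨c, hc, hc0⟩ := (h.and self_mem_nhdsWithin).exists
  exact ⟨c, hc0, fun i => (hc i).le⟩

lemma bilin_le_bilin {R E F G : Type*} [CommRing R] [AddCommGroup E] [PartialOrder E] [IsOrderedAddMonoid E]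
    [AddCommGroup F] [PartialOrder F] [IsOrderedAddMonoid F]
    [AddCommGroup G] [PartialOrder G] [IsOrderedAddMonoid G]
    [Module R E] [Module R F] [Module R G] {b : E →ₗ[R] F →ₗ[R] G}
    (hb : ∀ x y, 0 ≤ x → 0 ≤ y → 0 ≤ b x y) {x x' : E} {y y' : F}
    (hx : 0 ≤ x) (hxx' : x ≤ x') (hy : 0 ≤ y) (hyy' : y ≤ y') : b x y ≤ b x' y' := by
  have h : b x' y' - b x y = b (x' - x) y' + b x (y' - y) := by
    simp only [map_sub, LinearMap.sub_apply]; abel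
  exact sub_nonneg.1 (h ▸ add_nonneg (hb _ _ (sub_nonneg.2 hxx') (hy.trans hyy'))
    (hb _ _ hx (sub_nonneg.2 hyy')))

section ZMatrix

variable {ι : Type*}

def IsZMatrix (A : Matrix ι ι ℝ) : Prop :=
  ∀ i j, i ≠ j → A i j ≤ 0

lemma IsZMatrix.sub {A B : Matrix ι ι ℝ} (hA : IsZMatrix A)
    (hB : ∀ i j, 0 ≤ B i j) : IsZMatrix (A - B) :=
  fun i j hij => by simpa using (hA i j hij).trans (le_add_of_nonneg_right (hB i j))

variable [Fintype ι]

lemma mulVec_nonneg {A : Matrix ι ι ℝ} (hA : ∀ i j, 0 ≤ A i j) {v : ι → ℝ}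
    (hv : 0 ≤ v) : 0 ≤ A *ᵥ v :=
  fun i => show 0 ≤ ∑ j, A i j * v j from
    Finset.sum_nonneg fun j _ => mul_nonneg (hA i j) (hv j)

lemma IsZMatrix.mulVec_apply_nonpos {A : Matrix ι ι ℝ} (hA : IsZMatrix A)
    {u : ι → ℝ} (hu : 0 ≤ u) {i : ι} (hui : u i = 0) : (A *ᵥ u) i ≤ 0 := by
  show ∑ j, A i j * u j ≤ 0
  refine Finset.sum_nonpos fun j _ => ?_
  rcases eq_or_ne i j with rfl | hij
  · simp [hui]
  · exact mul_nonpos_of_nonpos_of_nonneg (hA i j hij) (hu j)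

lemma IsZMatrix.nonneg_of_mulVec_nonneg {A : Matrix ι ι ℝ} (hA : IsZMatrix A)
    (hA₀ : ∀ u, 0 ≤ u → A *ᵥ u ≤ 0 → u = 0) {v : ι → ℝ} (hv : 0 ≤ A *ᵥ v) : 0 ≤ v := by
  have hneg : A *ᵥ v⁻ ≤ 0 := by
    intro i
    rcases le_or_gt 0 (v i) with hvi | hvi
    · exact hA.mulVec_apply_nonpos (negPart_nonneg v) (by simpa using hvi)
    · have hpos : (A *ᵥ v⁺) i ≤ 0 :=
        hA.mulVec_apply_nonpos (posPart_nonneg v) (by simpa using hvi.le)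
      have hsplit : v⁻ = v⁺ - v :=
        eq_sub_of_add_eq (sub_eq_iff_eq_add'.1 (posPart_sub_negPart v)).symm
      rw [hsplit, Matrix.mulVec_sub]
      simpa using sub_nonpos_of_le (hpos.trans (hv i))
  exact negPart_eq_zero.1 (hA₀ _ (negPart_nonneg v) hneg)

lemma IsZMatrix.isUnit_det [DecidableEq ι] {A : Matrix ι ι ℝ} (hA : IsZMatrix A)
    (hA₀ : ∀ u, 0 ≤ u → A *ᵥ u ≤ 0 → u = 0) : IsUnit A.det := by
  refine isUnit_iff_ne_zero.2 fun hdet => ?_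
  obtain ⟨v, hv0, hv⟩ := Matrix.exists_mulVec_eq_zero_iff.2 hdet
  refine hv0 (le_antisymm ?_ (hA.nonneg_of_mulVec_nonneg hA₀ hv.ge))
  exact neg_nonneg.1 (hA.nonneg_of_mulVec_nonneg hA₀ (by rw [Matrix.mulVec_neg, hv, neg_zero]))

lemma IsMMat.isZMatrix {n : ℕ} {A : Matrix (Fin n) (Fin n) ℝ} (hA : IsMMat A) : IsZMatrix A := by
  obtain ⟨s, P, hP, -, rfl⟩ := hA
  intro i j hij
  simpa [Matrix.one_apply_ne hij] using hP i j

end ZMatrix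

section QVE

variable {ι : Type*} [Fintype ι] {M N P : Matrix ι ι ℝ} {a xs : ι → ℝ}
  {b b₁ b₂ : (ι → ℝ) →ₗ[ℝ] (ι → ℝ) →ₗ[ℝ] (ι → ℝ)}
  {J : (ι → ℝ) → Matrix ι ι ℝ} {g : (ι → ℝ) → ι → ℝ}

lemma splitting_remainder_nonneg (hb₁ : ∀ x y, 0 ≤ x → 0 ≤ y → 0 ≤ b₁ x y)
    (hb₂ : ∀ x y, 0 ≤ x → 0 ≤ y → 0 ≤ b₂ x y) (hP : ∀ i j, 0 ≤ P i j) {x w : ι → ℝ}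
    (hx : 0 ≤ x) (hxw : x ≤ w) : 0 ≤ P *ᵥ (w - x) + b₁ w (w - x) + (b₂ w w - b₂ x x) :=
  add_nonneg (add_nonneg (mulVec_nonneg hP (sub_nonneg.2 hxw))
    (hb₁ _ _ (hx.trans hxw) (sub_nonneg.2 hxw))) (sub_nonneg.2 (bilin_le_bilin hb₂ hx hxw hx hxw))

variable [DecidableEq ι]

lemma le_of_supersolution (hM : IsZMatrix M) (ha : 0 ≤ a)
    (hb : ∀ x y, 0 ≤ x → 0 ≤ y → 0 ≤ b x y)
    (hxs_min : ∀ s, 0 ≤ s → M *ᵥ s = a + b s s → xs ≤ s) {z : ι → ℝ} (hz : 0 ≤ z)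
    (hsup : a + b z z ≤ M *ᵥ z) : xs ≤ z := by
  obtain ⟨α, hα, hαM⟩ := exists_pos_forall_mul_le (fun i => M i i) (fun _ => 1) fun _ => one_pos
  have hR : ∀ i j, 0 ≤ (1 - α • M) i j := by
    intro i j
    rcases eq_or_ne i j with rfl | hij
    · simpa using hαM i
    · simpa [Matrix.one_apply_ne hij] using mul_nonneg hα.le (neg_nonneg.2 (hM i j hij))
  set G : (ι → ℝ) → ι → ℝ := fun y => y + α • (a + b y y - M *ᵥ y) with hG
  have hG_eq : ∀ y, G y = (1 - α • M) *ᵥ y + α • (a + b y y) := fun y => by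
    simp only [hG, Matrix.sub_mulVec, Matrix.one_mulVec, Matrix.smul_mulVec, smul_sub]; abel
  have hG_mono : MonotoneOn G (Set.Icc 0 z) := by
    intro y hy y' _ hyy'
    rw [hG_eq, hG_eq]
    refine add_le_add ?_ (smul_le_smul_of_nonneg_left ?_ hα.le)
    · simpa [Matrix.mulVec_sub] using mulVec_nonneg hR (sub_nonneg.2 hyy')
    · exact add_le_add_right (bilin_le_bilin hb hy.1 hyy' hy.1 hyy') a
  have hG0 : 0 ≤ G 0 := by simpa [hG] using smul_nonneg hα.le ha
  have hGz : G z ≤ z :=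
    add_le_of_nonpos_right (smul_nonpos_of_nonneg_of_nonpos hα.le (sub_nonpos.2 hsup))
  obtain ⟨y, hy, hGy⟩ := exists_fixedPt_of_monotoneOn_Icc hz hG_mono hG0 hGz
  have hsol : M *ᵥ y = a + b y y := by
    have : α • (a + b y y - M *ᵥ y) = 0 := add_eq_left.1 hGy
    exact (sub_eq_zero.1 ((smul_eq_zero.1 this).resolve_left hα.ne')).symm
  exact (hxs_min y hy.1 hsol).trans hy.2

lemma eq_zero_of_mulVec_le_bilin (hM : IsZMatrix M) (ha : 0 ≤ a)
    (hb : ∀ x y, 0 ≤ x → 0 ≤ y → 0 ≤ b x y) (hxs_sol : M *ᵥ xs = a + b xs xs)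
    (hxs_min : ∀ s, 0 ≤ s → M *ᵥ s = a + b s s → xs ≤ s) (hxs_pos : ∀ i, 0 < xs i)
    {u : ι → ℝ} (hu : 0 ≤ u) (hMu : M *ᵥ u ≤ b u xs) : u = 0 := by
  obtain ⟨c, hc, hcu⟩ := exists_pos_forall_mul_le u xs hxs_pos
  set w := c • u with hw
  have hw0 : 0 ≤ w := smul_nonneg hc.le hu
  have hMw : M *ᵥ w ≤ b w xs := by
    simpa [hw, Matrix.mulVec_smul] using smul_le_smul_of_nonneg_left hMu hc.le
  set z := xs - (1 / 2 : ℝ) • w with hz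
  have hz0 : 0 ≤ z := by
    have : z = (1 / 2 : ℝ) • xs + (1 / 2 : ℝ) • (xs - w) := by rw [hz]; module
    rw [this]
    exact add_nonneg (smul_nonneg (by norm_num) (fun i => (hxs_pos i).le))
      (smul_nonneg (by norm_num) (sub_nonneg.2 hcu))
  have hsup : a + b z z ≤ M *ᵥ z := by
    have key : M *ᵥ z - (a + b z z) = (1 / 2 : ℝ) • (b w xs - M *ᵥ w)
        + (1 / 4 : ℝ) • (b xs w - b w w) + (1 / 4 : ℝ) • b xs w := by
      simp only [hz, Matrix.mulVec_sub, Matrix.mulVec_smul, hxs_sol, map_sub, map_smul,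
        LinearMap.sub_apply, LinearMap.smul_apply]
      module
    refine sub_nonneg.1 (key ▸ add_nonneg (add_nonneg ?_ ?_) ?_)
    · exact smul_nonneg (by norm_num) (sub_nonneg.2 hMw)
    · exact smul_nonneg (by norm_num) (sub_nonneg.2 (bilin_le_bilin hb hw0 hcu hw0 le_rfl))
    · exact smul_nonneg (by norm_num) (hb _ _ (fun i => (hxs_pos i).le) hw0)
  have hw_nonpos : w ≤ 0 := by
    have h : (1 / 2 : ℝ) • w ≤ (1 / 2 : ℝ) • 0 := by
      simpa using (le_sub_self_iff _).1 (le_of_supersolution hM ha hb hxs_min hz0 hsup)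
    exact (smul_le_smul_iff_of_pos_left (by norm_num)).1 h
  exact (smul_eq_zero.1 (le_antisymm hw_nonpos hw0)).resolve_left hc.ne'

lemma jac_mulVec (hJ : ∀ x, J x = N - LinearMap.toMatrix' (b₁.flip x)) (x v : ι → ℝ) :
    J x *ᵥ v = N *ᵥ v - b₁ v x := by
  rw [hJ, Matrix.sub_mulVec, LinearMap.toMatrix'_mulVec, LinearMap.flip_apply]

lemma isZMatrix_jac (hN : IsZMatrix N) (hb₁ : ∀ x y, 0 ≤ x → 0 ≤ y → 0 ≤ b₁ x y)
    (hJ : ∀ x, J x = N - LinearMap.toMatrix' (b₁.flip x)) {x : ι → ℝ} (hx : 0 ≤ x) :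
    IsZMatrix (J x) := by
  rw [hJ]
  refine hN.sub fun i j => ?_
  rw [LinearMap.toMatrix'_apply, LinearMap.flip_apply]
  exact hb₁ _ _ (Pi.single_nonneg.2 zero_le_one) hx i

lemma eq_zero_of_jac_mulVec_nonpos (hM : IsZMatrix M) (ha : 0 ≤ a)
    (hb : ∀ x y, 0 ≤ x → 0 ≤ y → 0 ≤ b x y) (hb₁ : ∀ x y, 0 ≤ x → 0 ≤ y → 0 ≤ b₁ x y)
    (hb₂ : ∀ x y, 0 ≤ x → 0 ≤ y → 0 ≤ b₂ x y) (hbsplit : b = b₁ + b₂)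
    (hP : ∀ i j, 0 ≤ P i j) (hMsplit : M = N - P)
    (hxs_sol : M *ᵥ xs = a + b xs xs) (hxs_min : ∀ s, 0 ≤ s → M *ᵥ s = a + b s s → xs ≤ s)
    (hxs_pos : ∀ i, 0 < xs i) (hJ : ∀ x, J x = N - LinearMap.toMatrix' (b₁.flip x))
    {x u : ι → ℝ} (hx : 0 ≤ x) (hxxs : x ≤ xs) (hu : 0 ≤ u) (hJu : J x *ᵥ u ≤ 0) :
    u = 0 := by
  refine eq_zero_of_mulVec_le_bilin hM ha hb hxs_sol hxs_min hxs_pos hu ?_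
  have hxs : 0 ≤ xs := fun i => (hxs_pos i).le
  calc M *ᵥ u = N *ᵥ u - P *ᵥ u := by rw [hMsplit, Matrix.sub_mulVec]
    _ ≤ N *ᵥ u := sub_le_self _ (mulVec_nonneg hP hu)
    _ ≤ b₁ u x := by simpa [jac_mulVec hJ] using hJu
    _ ≤ b₁ u xs := bilin_le_bilin hb₁ hu le_rfl hx hxxs
    _ ≤ b₁ u xs + b₂ u xs := le_add_of_nonneg_right (hb₂ u xs hu hxs)
    _ = b u xs := by rw [hbsplit]; rfl

lemma jac_mulVec_sub_add (hbsplit : b = b₁ + b₂) (hMsplit : M = N - P)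
    (hJ : ∀ x, J x = N - LinearMap.toMatrix' (b₁.flip x)) (hg : ∀ x, g x = a + P *ᵥ x + b₂ x x)
    (x w : ι → ℝ) :
    (J x *ᵥ w - g x) + (a + b w w - M *ᵥ w) = P *ᵥ (w - x) + b₁ w (w - x) + (b₂ w w - b₂ x x) := by
  rw [jac_mulVec hJ, hg, hMsplit, hbsplit, Matrix.sub_mulVec, Matrix.mulVec_sub, map_sub]
  simp only [LinearMap.add_apply]
  abel

lemma functional_iteration_step (hb₁ : ∀ x y, 0 ≤ x → 0 ≤ y → 0 ≤ b₁ x y)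
    (hb₂ : ∀ x y, 0 ≤ x → 0 ≤ y → 0 ≤ b₂ x y) (hbsplit : b = b₁ + b₂) (hP : ∀ i j, 0 ≤ P i j)
    (hMsplit : M = N - P) (hJ : ∀ x, J x = N - LinearMap.toMatrix' (b₁.flip x))
    (hg : ∀ x, g x = a + P *ᵥ x + b₂ x x) (hxs_sol : M *ᵥ xs = a + b xs xs)
    {x y : ι → ℝ} (hx : 0 ≤ x) (hxxs : x ≤ xs) (hFx : M *ᵥ x ≤ a + b x x)
    (hJx : ∀ v, 0 ≤ J x *ᵥ v → 0 ≤ v) (hy : J x *ᵥ y = g x) :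
    x ≤ y ∧ y ≤ xs ∧ M *ᵥ y ≤ a + b y y := by
  have key := jac_mulVec_sub_add hbsplit hMsplit hJ hg x
  have hxy : x ≤ y := by
    have h := key x
    simp only [sub_self, Matrix.mulVec_zero, map_zero, add_zero] at h
    refine sub_nonneg.1 (hJx _ ?_)
    rw [Matrix.mulVec_sub, hy, ← neg_sub, ← eq_neg_of_add_eq_zero_right h]
    exact sub_nonneg.2 hFx
  refine ⟨hxy, sub_nonneg.1 (hJx _ ?_), ?_⟩
  · have h := key xs
    rw [hxs_sol, sub_self, add_zero] at h
    rw [Matrix.mulVec_sub, hy, h]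
    exact splitting_remainder_nonneg hb₁ hb₂ hP hx hxxs
  · have h := key y
    rw [hy, sub_self, zero_add] at h
    exact sub_nonneg.1 (h ▸ splitting_remainder_nonneg hb₁ hb₂ hP hx hxy)

lemma functional_iteration_tendsto (hbsplit : b = b₁ + b₂) (hMsplit : M = N - P)
    (hJ : ∀ x, J x = N - LinearMap.toMatrix' (b₁.flip x))
    (hg : ∀ x, g x = a + P *ᵥ x + b₂ x x)
    (hxs_min : ∀ s, 0 ≤ s → M *ᵥ s = a + b s s → xs ≤ s) {x : ℕ → ι → ℝ}
    (hmono : Monotone x) (hx0 : 0 ≤ x 0) (hle : ∀ k, x k ≤ xs)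
    (hrec : ∀ k, J (x k) *ᵥ x (k + 1) = g (x k)) : Tendsto x atTop (𝓝 xs) := by
  have hbdd : BddAbove (Set.range x) := ⟨xs, Set.forall_mem_range.2 hle⟩
  set L := ⨆ k, x k
  have htend : Tendsto x atTop (𝓝 L) := tendsto_atTop_ciSup hmono hbdd
  have hΦ : Continuous fun p : (ι → ℝ) × (ι → ℝ) => J p.2 *ᵥ p.1 - g p.2 := by
    simp only [jac_mulVec hJ, hg]
    have h₁ := b₁.toContinuousBilinearMap.continuous₂
    have h₂ := b₂.toContinuousBilinearMap.continuous₂.comp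
      (continuous_snd.prodMk continuous_snd : Continuous fun p : (ι → ℝ) × _ => (p.2, p.2))
    exact ((continuous_const.matrix_mulVec continuous_fst).sub h₁).sub
      ((continuous_const.add (continuous_const.matrix_mulVec continuous_snd)).add h₂)
  have hL : J L *ᵥ L - g L = 0 := by
    have h := (hΦ.tendsto (L, L)).comp ((htend.comp (tendsto_add_atTop_nat 1)).prodMk_nhds htend)
    exact tendsto_nhds_unique h (by simp [Function.comp_def, hrec])
  have hsol : M *ᵥ L = a + b L L := by
    have h := jac_mulVec_sub_add hbsplit hMsplit hJ hg L L
    simp only [hL, sub_self, Matrix.mulVec_zero, map_zero, add_zero, zero_add] at h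
    exact (sub_eq_zero.1 h).symm
  have hLxs : L = xs := le_antisymm (ciSup_le hle) (hxs_min L (hx0.trans (le_ciSup hbdd 0)) hsol)
  exact hLxs ▸ htend

end QVE

theorem qve_functional_iteration_converges_general {n : ℕ}
    (M : Matrix (Fin n) (Fin n) ℝ)
    (a : Fin n → ℝ) (ha : 0 ≤ a)
    (b b₁ b₂ : (Fin n → ℝ) →ₗ[ℝ] (Fin n → ℝ) →ₗ[ℝ] (Fin n → ℝ))
    (hb : ∀ x y : Fin n → ℝ, 0 ≤ x → 0 ≤ y → 0 ≤ b x y)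
    (hb₁ : ∀ x y : Fin n → ℝ, 0 ≤ x → 0 ≤ y → 0 ≤ b₁ x y)
    (hb₂ : ∀ x y : Fin n → ℝ, 0 ≤ x → 0 ≤ y → 0 ≤ b₂ x y)
    (hbsplit : b = b₁ + b₂)
    (N P : Matrix (Fin n) (Fin n) ℝ) (hN : IsMMat N) (hP : ∀ i j, 0 ≤ P i j)
    (hMsplit : M = N - P)
    -- the minimal nonnegative solution, positive, with nonsingular derivatives below it
    (xs : Fin n → ℝ) (hxs_sol : M *ᵥ xs = a + b xs xs)
    (hxs_min : ∀ s : Fin n → ℝ, 0 ≤ s → M *ᵥ s = a + b s s → xs ≤ s)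
    (hxs_pos : ∀ i, 0 < xs i)
    -- the functional iteration
    (J : (Fin n → ℝ) → Matrix (Fin n) (Fin n) ℝ)
    (hJ : ∀ x, J x = N - LinearMap.toMatrix' (b₁.flip x))
    (g : (Fin n → ℝ) → Fin n → ℝ)
    (hg : ∀ x, g x = a + P *ᵥ x + b₂ x x)
    (x : ℕ → Fin n → ℝ) (hx0_nonneg : 0 ≤ x 0) (hx0_le : x 0 ≤ xs)
    (hx0_F : M *ᵥ x 0 ≤ a + b (x 0) (x 0))
    (hrec : ∀ k, x (k + 1) = (J (x k))⁻¹ *ᵥ g (x k)) :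
    (∀ k, IsUnit (J (x k)).det) ∧
    (∀ k, x k ≤ x (k + 1) ∧ x (k + 1) ≤ xs) ∧
    Filter.Tendsto x Filter.atTop (nhds xs) ∧
    (∀ k, M *ᵥ x k ≤ a + b (x k) (x k)) := by
  have hN' := hN.isZMatrix
  have hJ₀ : ∀ y, 0 ≤ y → y ≤ xs → ∀ u, 0 ≤ u → J y *ᵥ u ≤ 0 → u = 0 := fun y hy hyxs _ =>
    eq_zero_of_jac_mulVec_nonpos (hMsplit ▸ hN'.sub hP) ha hb hb₁ hb₂ hbsplit hP hMsplit
      hxs_sol hxs_min hxs_pos hJ hy hyxs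
  have hunit : ∀ y, 0 ≤ y → y ≤ xs → IsUnit (J y).det := fun y hy hyxs =>
    (isZMatrix_jac hN' hb₁ hJ hy).isUnit_det (hJ₀ y hy hyxs)
  have hJrec : ∀ k, 0 ≤ x k → x k ≤ xs → J (x k) *ᵥ x (k + 1) = g (x k) := fun k hx hxxs => by
    rw [hrec k, mulVec_mulVec, mul_nonsing_inv _ (hunit _ hx hxxs), one_mulVec]
  have hstep : ∀ k, 0 ≤ x k → x k ≤ xs → M *ᵥ x k ≤ a + b (x k) (x k) →
      x k ≤ x (k + 1) ∧ x (k + 1) ≤ xs ∧ M *ᵥ x (k + 1) ≤ a + b (x (k + 1)) (x (k + 1)) :=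
    fun k hx hxxs hF => functional_iteration_step hb₁ hb₂ hbsplit hP hMsplit hJ hg hxs_sol hx
      hxxs hF (fun _ => (isZMatrix_jac hN' hb₁ hJ hx).nonneg_of_mulVec_nonneg (hJ₀ _ hx hxxs))
      (hJrec k hx hxxs)
  have hinv : ∀ k, 0 ≤ x k ∧ x k ≤ xs ∧ M *ᵥ x k ≤ a + b (x k) (x k) := by
    intro k
    induction k with
    | zero => exact ⟨hx0_nonneg, hx0_le, hx0_F⟩
    | succ k ih =>
      obtain ⟨hle, hxs, hF⟩ := hstep k ih.1 ih.2.1 ih.2.2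
      exact ⟨ih.1.trans hle, hxs, hF⟩
  have hstep' := fun k => hstep k (hinv k).1 (hinv k).2.1 (hinv k).2.2
  exact ⟨fun k => hunit _ (hinv k).1 (hinv k).2.1, fun k => ⟨(hstep' k).1, (hstep' k).2.1⟩,
    functional_iteration_tendsto hbsplit hMsplit hJ hg hxs_min
      (monotone_nat_of_le_succ fun k => (hstep' k).1) hx0_nonneg (fun k => (hinv k).2.1)
      (fun k => hJrec k (hinv k).1 (hinv k).2.1),
    fun k => (hinv k).2.2⟩

/-- Convergence of the functional iteration `J(x_k) x_{k+1} = g(x_k)` for the QVE,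
with `J(x) = N - b₁(·,x)` and `g(x) = a + P x + b₂(x,x)`, under the nondegeneracy
condition: the iterates are well defined, increase monotonically to the minimal
solution `x*`, and satisfy `F(x_k) ≤ 0`. -/
theorem qve_functional_iteration_converges {n : ℕ}
    (M : Matrix (Fin n) (Fin n) ℝ) (hM : IsNsMMat M)
    (a : Fin n → ℝ) (ha : 0 ≤ a)
    (b b₁ b₂ : (Fin n → ℝ) →ₗ[ℝ] (Fin n → ℝ) →ₗ[ℝ] (Fin n → ℝ))
    (hb : ∀ x y : Fin n → ℝ, 0 ≤ x → 0 ≤ y → 0 ≤ b x y)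
    (hb₁ : ∀ x y : Fin n → ℝ, 0 ≤ x → 0 ≤ y → 0 ≤ b₁ x y)
    (hb₂ : ∀ x y : Fin n → ℝ, 0 ≤ x → 0 ≤ y → 0 ≤ b₂ x y)
    (hbsplit : b = b₁ + b₂)
    (N P : Matrix (Fin n) (Fin n) ℝ) (hN : IsMMat N) (hP : ∀ i j, 0 ≤ P i j)
    (hMsplit : M = N - P)
    -- the minimal nonnegative solution, positive, with nonsingular derivatives below it
    (xs : Fin n → ℝ) (hxs_nonneg : 0 ≤ xs) (hxs_sol : M *ᵥ xs = a + b xs xs)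
    (hxs_min : ∀ s : Fin n → ℝ, 0 ≤ s → M *ᵥ s = a + b s s → xs ≤ s)
    (hxs_pos : ∀ i, 0 < xs i)
    (hnondeg : ∀ x : Fin n → ℝ, 0 ≤ x → x ≤ xs → x ≠ xs →
      IsNsMMat (M - LinearMap.toMatrix' (b x) - LinearMap.toMatrix' (b.flip x)))
    -- the functional iteration
    (J : (Fin n → ℝ) → Matrix (Fin n) (Fin n) ℝ)
    (hJ : ∀ x, J x = N - LinearMap.toMatrix' (b₁.flip x))
    (g : (Fin n → ℝ) → Fin n → ℝ)
    (hg : ∀ x, g x = a + P *ᵥ x + b₂ x x)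
    (x : ℕ → Fin n → ℝ) (hx0_nonneg : 0 ≤ x 0) (hx0_le : x 0 ≤ xs)
    (hx0_F : M *ᵥ x 0 ≤ a + b (x 0) (x 0))
    (hrec : ∀ k, x (k + 1) = (J (x k))⁻¹ *ᵥ g (x k)) :
    (∀ k, IsUnit (J (x k)).det) ∧
    (∀ k, x k ≤ x (k + 1) ∧ x (k + 1) ≤ xs) ∧
    Filter.Tendsto x Filter.atTop (nhds xs) ∧
    (∀ k, M *ᵥ x k ≤ a + b (x k) (x k)) :=
  qve_functional_iteration_converges_general M a ha b b₁ b₂ hb hb₁ hb₂ hbsplit N P hN hP hMsplit xs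
    hxs_sol hxs_min hxs_pos J hJ g hg x hx0_nonneg hx0_le hx0_F hrec
end

section
/- Let x* be a nonnegative solution of the QVE Mx = a + b(x,x), set R_x := M − b(·,x) (the matrix of w ↦ Mw − b(w,x)), and suppose R_y is a nonsingular M-matrix for every y with 0 ≤ y ≤ x*. Define G'_y := I − R_y⁻¹ b(R_y⁻¹ a, ·), where b(v, ·) denotes the matrix of w ↦ b(v, w). Then G'_{x*} = R_{x*}⁻¹ F'_{x*}, and G'_x ≥ G'_{x*} entrywise for every x with 0 ≤ x ≤ x*. -/
open Matrix Filter Topology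

/-!
At the solution, `R_{x*} x* = M x* - b(x*, x*) = a`, so `R_{x*}⁻¹ a = x*` and
`G'_{x*} = R_{x*}⁻¹ (R_{x*} - b(x*, ·)) = R_{x*}⁻¹ F'_{x*}`.

For `0 ≤ x ≤ x*` the positivity of `b` gives `R_{x*} ≤ R_x`. Both are nonsingular M-matrices,
hence have nonnegative inverses, and `R_{x*}⁻¹ - R_x⁻¹ = R_{x*}⁻¹ (R_x - R_{x*}) R_x⁻¹ ≥ 0`.
So `R_x⁻¹ a ≤ x*`, and then `R_x⁻¹ b(R_x⁻¹ a, ·) ≤ R_{x*}⁻¹ b(x*, ·)`.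

That the inverse of `s • 1 - P` (with `P ≥ 0`, `ρ(P) ≤ s`) is nonnegative is seen first for
`r > s`: with `t = r⁻¹ • P`, Gelfand's formula makes some power `tᵐ` a contraction, and
`(1 - t)⁻¹ = (∑_{k<m} tᵏ) (1 - tᵐ)⁻¹` is a product of nonnegative matrices (Neumann series).
Letting `r ↓ s` and using continuity of the inverse at the invertible `s • 1 - P` concludes.
-/

open scoped ENNReal

namespace Matrix

section Ordered

variable {ι R : Type*} [Fintype ι] [CommRing R] [PartialOrder R] [IsOrderedRing R]

theorem mul_apply_nonneg {A B : Matrix ι ι R} (hA : ∀ i j, 0 ≤ A i j) (hB : ∀ i j, 0 ≤ B i j)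
    (i j : ι) : 0 ≤ (A * B) i j :=
  Finset.sum_nonneg fun k _ => mul_nonneg (hA i k) (hB k j)

theorem mul_apply_le_mul_apply {A A' B B' : Matrix ι ι R} (hA : ∀ i j, 0 ≤ A i j)
    (hAA' : ∀ i j, A i j ≤ A' i j) (hB' : ∀ i j, 0 ≤ B' i j) (hBB' : ∀ i j, B i j ≤ B' i j)
    (i j : ι) : (A * B) i j ≤ (A' * B') i j :=
  Finset.sum_le_sum fun k _ => mul_le_mul_of_nonneg (hAA' i k) (hBB' k j) (hA i k) (hB' k j)

theorem mulVec_le_mulVec_of_apply_le {A A' : Matrix ι ι R} (hAA' : ∀ i j, A i j ≤ A' i j)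
    {v : ι → R} (hv : 0 ≤ v) : A *ᵥ v ≤ A' *ᵥ v :=
  fun i => dotProduct_le_dotProduct_of_nonneg_right (hAA' i) hv

theorem inv_apply_le_inv_apply_of_apply_le [DecidableEq ι] {A B : Matrix ι ι R}
    (hA : IsUnit A.det) (hB : IsUnit B.det) (hA_inv : ∀ i j, 0 ≤ A⁻¹ i j)
    (hB_inv : ∀ i j, 0 ≤ B⁻¹ i j) (hAB : ∀ i j, A i j ≤ B i j) (i j : ι) :
    B⁻¹ i j ≤ A⁻¹ i j := by
  have hdiff : A⁻¹ * (B - A) * B⁻¹ = A⁻¹ - B⁻¹ := by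
    rw [Matrix.mul_sub, Matrix.sub_mul, Matrix.mul_assoc, mul_nonsing_inv _ hB, Matrix.mul_one,
      nonsing_inv_mul _ hA, Matrix.one_mul]
  have hBA : ∀ i j, 0 ≤ (B - A) i j := fun i j => sub_nonneg.2 (hAB i j)
  have hdiff_nonneg := mul_apply_nonneg (mul_apply_nonneg hA_inv hBA) hB_inv i j
  rwa [hdiff, sub_apply, sub_nonneg] at hdiff_nonneg

end Ordered

theorem inv_one_sub_eq_geom_sum_mul {ι R : Type*} [Fintype ι] [DecidableEq ι] [CommRing R]
    {t : Matrix ι ι R} {m : ℕ} (h : IsUnit (1 - t ^ m).det) :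
    (1 - t)⁻¹ = (∑ k ∈ Finset.range m, t ^ k) * (1 - t ^ m)⁻¹ :=
  inv_eq_right_inv <| by rw [← Matrix.mul_assoc, mul_neg_geom_sum, mul_nonsing_inv _ h]

theorem inv_smul_of_ne_zero {ι K : Type*} [Fintype ι] [DecidableEq ι] [Field K] {k : K}
    (hk : k ≠ 0) (A : Matrix ι ι K) : (k • A)⁻¹ = k⁻¹ • A⁻¹ := by
  by_cases hA : IsUnit A.det
  · exact inv_smul' A (Units.mk0 k hk) hA
  · have hkA : ¬IsUnit (k • A).det := by
      simpa [det_smul, isUnit_iff_ne_zero, hk] using hA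
    rw [nonsing_inv_apply_not_isUnit _ hA, nonsing_inv_apply_not_isUnit _ hkA, smul_zero]

section LinftyNorm

attribute [local instance] Matrix.linftyOpNormedAddCommGroup Matrix.linftyOpNormedRing
  Matrix.linftyOpNormedAlgebra

variable {ι : Type*} [Fintype ι] [DecidableEq ι]

theorem norm_map_ofReal (A : Matrix ι ι ℝ) : ‖A.map Complex.ofReal‖ = ‖A‖ := by
  simp [linfty_opNorm_def]

theorem inv_one_sub_apply_nonneg_of_norm_lt_one {B : Matrix ι ι ℝ} (hB : ∀ i j, 0 ≤ B i j)
    (hB_norm : ‖B‖ < 1) (i j : ι) : 0 ≤ (1 - B)⁻¹ i j := by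
  have hsum := hasSum_geom_series_inverse B hB_norm
  rw [← nonsing_inv_eq_ringInverse] at hsum
  exact (Pi.hasSum.1 (Pi.hasSum.1 hsum i) j).nonneg fun k => pow_apply_nonneg hB k i j

theorem inv_one_sub_apply_nonneg_of_norm_pow_lt_one {t : Matrix ι ι ℝ} (ht : ∀ i j, 0 ≤ t i j)
    {m : ℕ} (hm : ‖t ^ m‖ < 1) (i j : ι) : 0 ≤ (1 - t)⁻¹ i j := by
  have hdet : IsUnit (1 - t ^ m).det :=
    (isUnit_iff_isUnit_det _).1 (isUnit_one_sub_of_norm_lt_one hm)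
  have hsum : ∀ i j, 0 ≤ (∑ k ∈ Finset.range m, t ^ k) i j := fun i j => by
    rw [sum_apply]
    exact Finset.sum_nonneg fun k _ => pow_apply_nonneg ht k i j
  rw [inv_one_sub_eq_geom_sum_mul hdet]
  exact mul_apply_nonneg hsum
    (inv_one_sub_apply_nonneg_of_norm_lt_one (pow_apply_nonneg ht m) hm) i j

end LinftyNorm

end Matrix

theorem spectrum.exists_norm_pow_lt_pow {A : Type*} [NormedRing A] [NormedAlgebra ℂ A]
    [CompleteSpace A] (a : A) {r : ℝ} (hr : spectralRadius ℂ a < ENNReal.ofReal r) :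
    ∃ m : ℕ, ‖a ^ m‖ < r ^ m := by
  obtain ⟨m, hm_root, hm⟩ :=
    (((spectrum.pow_norm_pow_one_div_tendsto_nhds_spectralRadius a).eventually
      (gt_mem_nhds hr)).and (eventually_ne_atTop 0)).exists
  rw [ENNReal.ofReal_lt_ofReal_iff', one_div] at hm_root
  refine ⟨m, ?_⟩
  calc ‖a ^ m‖ = (‖a ^ m‖ ^ (m⁻¹ : ℝ)) ^ m := (Real.rpow_inv_natCast_pow (norm_nonneg _) hm).symm
    _ < r ^ m := pow_lt_pow_left₀ hm_root.1 (by positivity) hm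

namespace LinearMap

section PositiveBilinear

variable {ι R : Type*} [Fintype ι] [DecidableEq ι] [CommRing R] [PartialOrder R]
  [IsOrderedRing R]

theorem toMatrix'_apply_le_of_le {f g : (ι → R) →ₗ[R] (ι → R)}
    (hfg : ∀ y, 0 ≤ y → f y ≤ g y) (i j : ι) : toMatrix' f i j ≤ toMatrix' g i j := by
  simpa only [toMatrix'_apply] using hfg _ (Pi.single_nonneg.2 zero_le_one) i

variable {b : (ι → R) →ₗ[R] (ι → R) →ₗ[R] (ι → R)}
  (hb : ∀ x y : ι → R, 0 ≤ x → 0 ≤ y → 0 ≤ b x y)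
include hb

theorem toMatrix'_apply_le_of_le_left {u w : ι → R} (huw : u ≤ w) (i j : ι) :
    toMatrix' (b u) i j ≤ toMatrix' (b w) i j :=
  toMatrix'_apply_le_of_le (fun y hy => by
    simpa only [map_sub, sub_apply, sub_nonneg] using hb _ y (sub_nonneg.2 huw) hy) i j

theorem toMatrix'_flip_apply_le_of_le {u w : ι → R} (huw : u ≤ w) (i j : ι) :
    toMatrix' (b.flip u) i j ≤ toMatrix' (b.flip w) i j :=
  toMatrix'_apply_le_of_le (fun y hy => by
    simpa only [flip_apply, map_sub, sub_nonneg] using hb y _ hy (sub_nonneg.2 huw)) i j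

theorem toMatrix'_apply_nonneg_of_nonneg {u : ι → R} (hu : 0 ≤ u) (i j : ι) :
    0 ≤ toMatrix' (b u) i j := by
  simpa using toMatrix'_apply_le_of_le_left hb hu i j

end PositiveBilinear

end LinearMap

section MMatrix

variable {n : ℕ}

theorem specRad_nonneg (A : Matrix (Fin n) (Fin n) ℝ) : 0 ≤ specRad A :=
  Real.sSup_nonneg <| by rintro _ ⟨μ, -, rfl⟩; exact norm_nonneg μ

section LinftyNorm

attribute [local instance] Matrix.linftyOpNormedAddCommGroup Matrix.linftyOpNormedRing
  Matrix.linftyOpNormedAlgebra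

theorem spectralRadius_map_ofReal_le_specRad (A : Matrix (Fin n) (Fin n) ℝ) :
    spectralRadius ℂ (A.map Complex.ofReal) ≤ ENNReal.ofReal (specRad A) := by
  have hbdd : BddAbove {r : ℝ | ∃ μ ∈ spectrum ℂ (A.map Complex.ofReal), ‖μ‖ = r} :=
    ((spectrum.isCompact _).image continuous_norm).bddAbove
  refine iSup₂_le fun μ hμ => ?_
  rw [← ENNReal.ofReal_coe_nnreal, coe_nnnorm]
  exact ENNReal.ofReal_le_ofReal (le_csSup hbdd ⟨μ, hμ, rfl⟩)

theorem inv_smul_one_sub_apply_nonneg_of_specRad_lt {P : Matrix (Fin n) (Fin n) ℝ}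
    (hP : ∀ i j, 0 ≤ P i j) {r : ℝ} (hr : specRad P < r) (i j : Fin n) :
    0 ≤ (r • (1 : Matrix (Fin n) (Fin n) ℝ) - P)⁻¹ i j := by
  have hr0 : 0 < r := (specRad_nonneg P).trans_lt hr
  obtain ⟨m, hm⟩ := spectrum.exists_norm_pow_lt_pow (P.map Complex.ofReal)
    ((spectralRadius_map_ofReal_le_specRad P).trans_lt ((ENNReal.ofReal_lt_ofReal_iff hr0).2 hr))
  have hpow : (P.map Complex.ofReal) ^ m = (P ^ m).map Complex.ofReal :=
    (Matrix.map_pow P Complex.ofRealHom m).symm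
  rw [hpow, Matrix.norm_map_ofReal] at hm
  set t := r⁻¹ • P
  have ht : ∀ i j, 0 ≤ t i j := fun i j => mul_nonneg (inv_nonneg.2 hr0.le) (hP i j)
  have ht_pow : ‖t ^ m‖ < 1 := by
    rwa [smul_pow, norm_smul, norm_pow, norm_inv, Real.norm_of_nonneg hr0.le, inv_pow,
      inv_mul_lt_one₀ (by positivity)]
  have hrt : r • (1 : Matrix (Fin n) (Fin n) ℝ) - P = r • (1 - t) := by
    rw [smul_sub, smul_smul, mul_inv_cancel₀ hr0.ne', one_smul]
  rw [hrt, Matrix.inv_smul_of_ne_zero hr0.ne', Matrix.smul_apply, smul_eq_mul]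
  exact mul_nonneg (inv_nonneg.2 hr0.le)
    (Matrix.inv_one_sub_apply_nonneg_of_norm_pow_lt_one ht ht_pow i j)

end LinftyNorm

theorem IsNsMMat.inv_apply_nonneg {A : Matrix (Fin n) (Fin n) ℝ} (hA : IsNsMMat A)
    (i j : Fin n) : 0 ≤ A⁻¹ i j := by
  obtain ⟨⟨s, P, hP, hs, rfl⟩, hdet⟩ := hA
  have hinv : ContinuousAt (fun r : ℝ => (r • (1 : Matrix (Fin n) (Fin n) ℝ) - P)⁻¹) s :=
    (continuousAt_matrix_inv _ (NormedRing.inverse_continuousAt hdet.unit)).comp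
      (f := fun r : ℝ => r • (1 : Matrix (Fin n) (Fin n) ℝ) - P) (by fun_prop)
  have hcont : ContinuousAt (fun r : ℝ => (r • (1 : Matrix (Fin n) (Fin n) ℝ) - P)⁻¹ i j) s :=
    (continuous_id.matrix_elem i j).continuousAt.comp hinv
  exact ge_of_tendsto (hcont.mono_left (nhdsWithin_le_nhds (s := Set.Ioi s))) <|
    eventually_nhdsWithin_of_forall fun r hr =>
      inv_smul_one_sub_apply_nonneg_of_specRad_lt hP (hs.trans_lt hr) i j

end MMatrix

theorem qve_modified_newton_jacobian_general {n : ℕ}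
    (M : Matrix (Fin n) (Fin n) ℝ)
    (a : Fin n → ℝ) (ha : 0 ≤ a)
    (b : (Fin n → ℝ) →ₗ[ℝ] (Fin n → ℝ) →ₗ[ℝ] (Fin n → ℝ))
    (hb : ∀ x y : Fin n → ℝ, 0 ≤ x → 0 ≤ y → 0 ≤ b x y)
    (xs : Fin n → ℝ) (hxs_nonneg : 0 ≤ xs) (hxs_sol : M *ᵥ xs = a + b xs xs)
    (R : (Fin n → ℝ) → Matrix (Fin n) (Fin n) ℝ)
    (hR : ∀ x, R x = M - LinearMap.toMatrix' (b.flip x))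
    (hRns : ∀ y : Fin n → ℝ, 0 ≤ y → y ≤ xs → IsNsMMat (R y))
    (Gder : (Fin n → ℝ) → Matrix (Fin n) (Fin n) ℝ)
    (hGder : ∀ y, Gder y = 1 - (R y)⁻¹ * LinearMap.toMatrix' (b ((R y)⁻¹ *ᵥ a))) :
    Gder xs =
      (R xs)⁻¹ * (M - LinearMap.toMatrix' (b xs) - LinearMap.toMatrix' (b.flip xs)) ∧
    ∀ x : Fin n → ℝ, 0 ≤ x → x ≤ xs → ∀ i j, Gder xs i j ≤ Gder x i j := by
  have hRxs := hRns xs hxs_nonneg le_rfl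
  have hxs_fixed : (R xs)⁻¹ *ᵥ a = xs := by
    have hRxs_xs : R xs *ᵥ xs = a := by
      rw [hR, sub_mulVec, LinearMap.toMatrix'_mulVec, LinearMap.flip_apply, hxs_sol,
        add_sub_cancel_right]
    rw [← hRxs_xs, mulVec_mulVec, nonsing_inv_mul _ hRxs.2, one_mulVec]
  refine ⟨?_, fun x hx hx_le i j => ?_⟩
  · have hF : M - LinearMap.toMatrix' (b xs) - LinearMap.toMatrix' (b.flip xs) =
        R xs - LinearMap.toMatrix' (b xs) := by rw [hR]; abel
    rw [hGder, hxs_fixed, hF, Matrix.mul_sub, nonsing_inv_mul _ hRxs.2]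
  · have hRx := hRns x hx hx_le
    have hinv_le : ∀ i j, (R x)⁻¹ i j ≤ (R xs)⁻¹ i j :=
      inv_apply_le_inv_apply_of_apply_le hRxs.2 hRx.2 hRxs.inv_apply_nonneg hRx.inv_apply_nonneg
        fun i j => by
          rw [hR, hR, Matrix.sub_apply, Matrix.sub_apply]
          exact sub_le_sub_left (LinearMap.toMatrix'_flip_apply_le_of_le hb hx_le i j) _
    have hv_le : (R x)⁻¹ *ᵥ a ≤ xs := hxs_fixed ▸ mulVec_le_mulVec_of_apply_le hinv_le ha
    have hprod := mul_apply_le_mul_apply hRx.inv_apply_nonneg hinv_le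
      (LinearMap.toMatrix'_apply_nonneg_of_nonneg hb hxs_nonneg)
      (LinearMap.toMatrix'_apply_le_of_le_left hb hv_le) i j
    rw [hGder, hGder, hxs_fixed, Matrix.sub_apply, Matrix.sub_apply]
    exact sub_le_sub_left hprod _

/-- For the modified Newton method: with `R_x = M - b(·,x)` and
`G'_x = I - R_x⁻¹ b(R_x⁻¹ a, ·)`, if `x*` is a nonnegative solution of the QVE and
`R_y` is a nonsingular M-matrix for all `0 ≤ y ≤ x*`, then
`G'_{x*} = R_{x*}⁻¹ F'_{x*}`, and `G'_x ≥ G'_{x*}` entrywise for all `0 ≤ x ≤ x*`. -/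
theorem qve_modified_newton_jacobian {n : ℕ}
    (M : Matrix (Fin n) (Fin n) ℝ) (hM : IsNsMMat M)
    (a : Fin n → ℝ) (ha : 0 ≤ a)
    (b : (Fin n → ℝ) →ₗ[ℝ] (Fin n → ℝ) →ₗ[ℝ] (Fin n → ℝ))
    (hb : ∀ x y : Fin n → ℝ, 0 ≤ x → 0 ≤ y → 0 ≤ b x y)
    (xs : Fin n → ℝ) (hxs_nonneg : 0 ≤ xs) (hxs_sol : M *ᵥ xs = a + b xs xs)
    (R : (Fin n → ℝ) → Matrix (Fin n) (Fin n) ℝ)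
    (hR : ∀ x, R x = M - LinearMap.toMatrix' (b.flip x))
    (hRns : ∀ y : Fin n → ℝ, 0 ≤ y → y ≤ xs → IsNsMMat (R y))
    (Gder : (Fin n → ℝ) → Matrix (Fin n) (Fin n) ℝ)
    (hGder : ∀ y, Gder y = 1 - (R y)⁻¹ * LinearMap.toMatrix' (b ((R y)⁻¹ *ᵥ a))) :
    Gder xs =
      (R xs)⁻¹ * (M - LinearMap.toMatrix' (b xs) - LinearMap.toMatrix' (b.flip xs)) ∧
    ∀ x : Fin n → ℝ, 0 ≤ x → x ≤ xs → ∀ i j, Gder xs i j ≤ Gder x i j :=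
  qve_modified_newton_jacobian_general M a ha b hb xs hxs_nonneg hxs_sol R hR hRns Gder hGder
end

section
/- Let M be a nonsingular n×n real matrix, a ∈ ℝⁿ, and b : ℝⁿ × ℝⁿ → ℝⁿ bilinear. If x ∈ ℝⁿ satisfies Mx = a + b(x,x), then v₁ := M⁻¹ b(x,x) satisfies the equation M v₁ − b(M⁻¹a, v₁) − b(v₁, M⁻¹a) = b(M⁻¹a, M⁻¹a) + b(v₁, v₁); equivalently, −b(M⁻¹a, M⁻¹a) + (M − b(M⁻¹a, ·) − b(·, M⁻¹a)) v₁ − b(v₁, v₁) = 0. -/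
open Matrix

/-! Write `u := M⁻¹a`. Applying `M⁻¹` to `Mx = a + b(x,x)` gives `x = u + v₁`, while `Mv₁ = b(x,x)`.
Expanding `b(u + v₁, u + v₁)` by bilinearity and moving the cross terms `b(u,v₁)`, `b(v₁,u)` to the
left is the claimed equation. -/

theorem LinearMap.map_add_add_self {R M N : Type*} [CommSemiring R] [AddCommMonoid M]
    [AddCommMonoid N] [Module R M] [Module R N] (b : M →ₗ[R] M →ₗ[R] N) (u v : M) :
    b (u + v) (u + v) = b u u + b u v + b v u + b v v := by
  simp only [map_add, LinearMap.add_apply]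
  abel

theorem LinearMap.sub_cross_eq_of_eq_map_add_add_self {R M N : Type*} [CommSemiring R]
    [AddCommMonoid M] [AddCommGroup N] [Module R M] [Module R N] (b : M →ₗ[R] M →ₗ[R] N)
    {w : N} {u v : M} (h : w = b (u + v) (u + v)) :
    w - b u v - b v u = b u u + b v v := by
  rw [h, b.map_add_add_self]
  abel

theorem Matrix.eq_nonsing_inv_mulVec_add {n R : Type*} [Fintype n] [DecidableEq n] [CommRing R]
    {M : Matrix n n R} (hM : IsUnit M.det) {x a c : n → R} (hx : M *ᵥ x = a + c) :
    x = M⁻¹ *ᵥ a + M⁻¹ *ᵥ c := by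
  rw [← mulVec_add, ← hx, mulVec_mulVec, nonsing_inv_mul M hM, one_mulVec]

theorem Matrix.mulVec_nonsing_inv_mulVec {n R : Type*} [Fintype n] [DecidableEq n] [CommRing R]
    {M : Matrix n n R} (hM : IsUnit M.det) (c : n → R) : M *ᵥ (M⁻¹ *ᵥ c) = c := by
  rw [mulVec_mulVec, mul_nonsing_inv M hM, one_mulVec]

/-- Graeffe-type transformation: if `M x = a + b(x,x)` with `M` nonsingular and `b`
bilinear, then `v₁ = M⁻¹ b(x,x)` satisfies
`M v₁ - b(M⁻¹a, v₁) - b(v₁, M⁻¹a) = b(M⁻¹a, M⁻¹a) + b(v₁, v₁)`. -/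
theorem qve_graeffe_transformation {n : ℕ}
    (M : Matrix (Fin n) (Fin n) ℝ) (hM : IsUnit M.det)
    (a : Fin n → ℝ)
    (b : (Fin n → ℝ) →ₗ[ℝ] (Fin n → ℝ) →ₗ[ℝ] (Fin n → ℝ))
    (x : Fin n → ℝ) (hx : M *ᵥ x = a + b x x)
    (v₁ : Fin n → ℝ) (hv₁ : v₁ = M⁻¹ *ᵥ b x x) :
    M *ᵥ v₁ - b (M⁻¹ *ᵥ a) v₁ - b v₁ (M⁻¹ *ᵥ a) =
      b (M⁻¹ *ᵥ a) (M⁻¹ *ᵥ a) + b v₁ v₁ := by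
  have hx_split : x = M⁻¹ *ᵥ a + v₁ := hv₁ ▸ eq_nonsing_inv_mulVec_add hM hx
  have hMv₁ : M *ᵥ v₁ = b x x := hv₁ ▸ mulVec_nonsing_inv_mulVec hM _
  exact b.sub_cross_eq_of_eq_map_add_add_self (hx_split ▸ hMv₁)
end
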